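/- Let A ∈ GL(n, ℤ) and let φ : B_r → B_r be a Λ_A-equivariant symplectomorphism of B_r, i.e. φ is a bijection of B_r onto itself, both φ and φ⁻¹ are C^∞ on B_r, φ is symplectic, and φ is Λ_A-equivariant (note φ(0) = 0 follows automatically). Then for every t with 0 < t ≤ 1 the map φ_t(z) = t⁻¹·φ(t·z) is again a Λ_A-equivariant symplectomorphism of B_r: φ_t maps B_r bijectively onto B_r with inverse z ↦ t⁻¹·φ⁻¹(t·z), both φ_t and its inverse are C^∞ on B_r, φ_t is symplectic, and φ_t is Λ_A-equivariant. -/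

import Mathlib

open scoped BigOperators

/-- The standard symplectic form on `ℂⁿ`: `ω₀(u, v) = ∑ₖ Im(conj(uₖ)·vₖ)`. -/
noncomputable def omega0 (n : ℕ) (u v : EuclideanSpace ℂ (Fin n)) : ℝ :=
  ∑ k, ((starRingEnd ℂ) (u k) * v k).im

/-- The componentwise rotation action of the `n`-torus `Tⁿ = (S¹)ⁿ` on `ℂⁿ`. -/
def torusSMul (n : ℕ) (t : Fin n → Circle) (z : EuclideanSpace ℂ (Fin n)) :
    EuclideanSpace ℂ (Fin n) :=
  WithLp.toLp 2 (fun k => (t k : ℂ) * z k)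

/-- For `A ∈ GL(n, ℤ)`, the induced torus automorphism `Λ_A(t)ᵢ = ∏ⱼ tⱼ^{Aᵢⱼ}`. -/
noncomputable def torusAut (n : ℕ) (A : GL (Fin n) ℤ) (t : Fin n → Circle) : Fin n → Circle :=
  fun i => ∏ j, t j ^ ((A : Matrix (Fin n) (Fin n) ℤ) i j)

/-- `φ` is symplectic on the closed ball of radius `r`: it is `C^∞` there and its
Fréchet derivative (within the ball) preserves `ω₀` at every point. -/
noncomputable def IsSymplecticOn (n : ℕ) (r : ℝ)
    (φ : EuclideanSpace ℂ (Fin n) → EuclideanSpace ℂ (Fin n)) : Prop :=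
  ContDiffOn ℝ (⊤ : ℕ∞) φ (Metric.closedBall 0 r) ∧
    ∀ z ∈ Metric.closedBall (0 : EuclideanSpace ℂ (Fin n)) r, ∀ u v,
      omega0 n (fderivWithin ℝ φ (Metric.closedBall 0 r) z u)
        (fderivWithin ℝ φ (Metric.closedBall 0 r) z v) = omega0 n u v

/-- `φ` is `Λ_A`-equivariant on the closed ball of radius `r`. -/
def IsEquivariantOn (n : ℕ) (r : ℝ) (A : GL (Fin n) ℤ)
    (φ : EuclideanSpace ℂ (Fin n) → EuclideanSpace ℂ (Fin n)) : Prop :=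
  ∀ t : Fin n → Circle, ∀ z ∈ Metric.closedBall (0 : EuclideanSpace ℂ (Fin n)) r,
    φ (torusSMul n t z) = torusSMul n (torusAut n A t) (φ z)

/-! ### Auxiliary machinery -/

open Complex Metric Set Finset

namespace AlexanderAux

variable {n : ℕ}

local notation "E" => EuclideanSpace ℂ (Fin n)

/-- The infinitesimal rotation vector field with angular velocities `a`. -/
noncomputable def rot (n : ℕ) (a : Fin n → ℝ) (w : EuclideanSpace ℂ (Fin n)) :
    EuclideanSpace ℂ (Fin n) := WithLp.toLp 2 (fun i => (a i : ℂ) * Complex.I * w i)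

/-- The rotation curve with angular velocities `a` through `w`. -/
noncomputable def curve (n : ℕ) (a : Fin n → ℝ) (w : EuclideanSpace ℂ (Fin n)) (θ : ℝ) :
    EuclideanSpace ℂ (Fin n) := WithLp.toLp 2 (fun i => Complex.exp (θ * ((a i : ℂ) * Complex.I)) * w i)

/- ### omega0 algebra -/

lemma omega0_smul_left (a : ℝ) (u v : E) : omega0 n (a • u) v = a * omega0 n u v := by
  simp only [omega0, Finset.mul_sum]
  congr 1; funext k
  have : (a • u) k = (a : ℂ) * u k := rfl
  rw [this]
  simp [Complex.mul_im]
  ring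

lemma omega0_smul_right (a : ℝ) (u v : E) : omega0 n u (a • v) = a * omega0 n u v := by
  simp only [omega0, Finset.mul_sum]
  congr 1; funext k
  have : (a • v) k = (a : ℂ) * v k := rfl
  rw [this]
  simp [Complex.mul_im]
  ring

lemma omega0_sum_left (f : Fin n → E) (v : E) :
    omega0 n (∑ k, f k) v = ∑ k, omega0 n (f k) v := by
  simp only [omega0]
  rw [Finset.sum_comm]
  congr 1; funext k
  rw [WithLp.ofLp_sum, Finset.sum_apply, map_sum, Finset.sum_mul, Complex.im_sum]

/- ### Euclidean norm facts -/

lemma normSq_sum_eq (w : E) : ∑ k, Complex.normSq (w k) = ‖w‖ ^ 2 := by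
  rw [EuclideanSpace.norm_eq, Real.sq_sqrt (by positivity)]
  simp [Complex.sq_norm]

/- ### derivative of the rotation curves -/

lemma hasDerivAt_E_of_pi {f : ℝ → EuclideanSpace ℂ (Fin n)} {f' : EuclideanSpace ℂ (Fin n)}
    {x : ℝ} (h : ∀ i, HasDerivAt (fun θ => f θ i) (f' i) x) : HasDerivAt f f' x := by
  set iso : (Fin n → ℂ) ≃L[ℝ] EuclideanSpace ℂ (Fin n) :=
    (PiLp.continuousLinearEquiv 2 ℝ (fun _ : Fin n => ℂ)).symm
  have hpi : HasDerivAt (fun θ => (fun i => f θ i : Fin n → ℂ)) (fun i => f' i) x :=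
    hasDerivAt_pi.2 h
  have h2 : HasFDerivAt (fun θ => iso ((fun i => f θ i : Fin n → ℂ)))
      ((iso : (Fin n → ℂ) →L[ℝ] EuclideanSpace ℂ (Fin n)).comp
        (ContinuousLinearMap.smulRight (1 : ℝ →L[ℝ] ℝ) (fun i => f' i))) x :=
    iso.comp_hasFDerivAt_iff.mpr hpi.hasFDerivAt
  have h3 : ((iso : (Fin n → ℂ) →L[ℝ] EuclideanSpace ℂ (Fin n)).comp
        (ContinuousLinearMap.smulRight (1 : ℝ →L[ℝ] ℝ) (fun i => f' i)))
      = ContinuousLinearMap.smulRight (1 : ℝ →L[ℝ] ℝ) f' := by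
    ext θ; rfl
  rw [h3] at h2
  exact (by simpa using h2.hasDerivAt : HasDerivAt (fun θ => iso ((fun i => f θ i : Fin n → ℂ))) f' x)

lemma hasDerivAt_curve (a : Fin n → ℝ) (w : E) :
    HasDerivAt (curve n a w) (rot n a w) 0 := by
  apply hasDerivAt_E_of_pi
  intro i
  have h1 : HasDerivAt (fun θ : ℝ => (θ : ℂ)) 1 0 := Complex.ofRealCLM.hasDerivAt
  have h2 : HasDerivAt (fun θ : ℝ => (θ : ℂ) * ((a i : ℂ) * Complex.I))
      ((a i : ℂ) * Complex.I) 0 := by simpa using h1.mul_const ((a i : ℂ) * Complex.I)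
  have h3 := (h2.cexp).mul_const (w i)
  simpa [curve, rot] using h3

lemma norm_curve (a : Fin n → ℝ) (w : E) (θ : ℝ) : ‖curve n a w θ‖ = ‖w‖ := by
  rw [EuclideanSpace.norm_eq, EuclideanSpace.norm_eq]
  congr 1
  apply Finset.sum_congr rfl
  intro i _
  have h1 : ‖(Complex.exp ((θ : ℂ) * ((a i : ℂ) * Complex.I)))‖ = 1 := by
    have h : (θ : ℂ) * ((a i : ℂ) * Complex.I) = ((θ * a i : ℝ) : ℂ) * Complex.I := by
      push_cast; ring
    rw [h, Complex.norm_exp_ofReal_mul_I]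
  simp [curve, map_mul, h1]

lemma curve_zero (a : Fin n → ℝ) (w : E) : curve n a w 0 = w := by
  ext i : 1; simp [curve]

lemma curve_eq_torusSMul (k : Fin n) (z : E) (θ : ℝ) :
    curve n (fun i => if i = k then 1 else 0) z θ
      = torusSMul n (fun l => if l = k then Circle.exp θ else 1) z := by
  ext i : 1
  simp only [curve, torusSMul]
  by_cases h : i = k <;> simp [h, Circle.coe_exp]

lemma torusAut_exp_single (A : GL (Fin n) ℤ) (k i : Fin n) (θ : ℝ) :
    ((torusAut n A (fun l => if l = k then Circle.exp θ else 1) i : Circle) : ℂ)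
      = Complex.exp (θ * (((A : Matrix (Fin n) (Fin n) ℤ) i k : ℝ) * Complex.I)) := by
  unfold torusAut
  show Circle.coeHom (∏ j, _) = _
  rw [map_prod]
  have h : ∀ l : Fin n,
      Circle.coeHom ((if l = k then Circle.exp θ else 1) ^ ((A : Matrix (Fin n) (Fin n) ℤ) i l))
      = if l = k then (Complex.exp (θ * Complex.I)) ^ ((A : Matrix (Fin n) (Fin n) ℤ) i k)
        else 1 := by
    intro l
    by_cases h : l = k
    · subst h
      simp [map_zpow' Circle.coeHom Circle.coe_inv, Circle.coe_exp]
      exact congrArg (· ^ _) (Circle.coe_exp θ)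
    · simp [h]
  rw [Finset.prod_congr rfl (fun l _ => h l), Finset.prod_ite_eq' Finset.univ k
    (fun _ => (Complex.exp (θ * Complex.I)) ^ ((A : Matrix (Fin n) (Fin n) ℤ) i k))]
  simp only [Finset.mem_univ, if_true]
  rw [← Complex.exp_int_mul]
  congr 1
  push_cast
  ring

lemma rot_sum (a : Fin n → ℝ) (w : E) :
    rot n a w = ∑ k, a k • rot n (fun i => if i = k then 1 else 0) w := by
  ext i : 1
  rw [WithLp.ofLp_sum, Finset.sum_apply]
  have h : ∀ k : Fin n, (a k • rot n (fun i => if i = k then 1 else 0) w) i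
      = (if i = k then (a k : ℂ) * Complex.I * w i else 0) := by
    intro k
    by_cases h : i = k
    · subst h
      simp [rot, Complex.real_smul, PiLp.smul_apply]
      ring
    · simp [rot, h, Complex.real_smul, PiLp.smul_apply]
  rw [Finset.sum_congr rfl (fun k _ => h k)]
  simp [rot, Finset.sum_ite_eq]

/- ### projections and the derivative of `w ↦ normSq (w j)` -/

noncomputable def reProj (n : ℕ) (j : Fin n) : EuclideanSpace ℂ (Fin n) →L[ℝ] ℝ :=
  Complex.reCLM.comp ((EuclideanSpace.proj j : EuclideanSpace ℂ (Fin n) →L[ℂ] ℂ).restrictScalars ℝ)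
noncomputable def imProj (n : ℕ) (j : Fin n) : EuclideanSpace ℂ (Fin n) →L[ℝ] ℝ :=
  Complex.imCLM.comp ((EuclideanSpace.proj j : EuclideanSpace ℂ (Fin n) →L[ℂ] ℂ).restrictScalars ℝ)

noncomputable def dNormSq (n : ℕ) (j : Fin n) (w : EuclideanSpace ℂ (Fin n)) :
    EuclideanSpace ℂ (Fin n) →L[ℝ] ℝ :=
  (2 * (w j).re) • reProj n j + (2 * (w j).im) • imProj n j

lemma hasFDerivAt_normSq_comp (j : Fin n) (w : E) :
    HasFDerivAt (fun w : E => Complex.normSq (w j)) (dNormSq n j w) w := by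
  have hp : HasFDerivAt (fun w : E => reProj n j w) (reProj n j) w := (reProj n j).hasFDerivAt
  have hq : HasFDerivAt (fun w : E => imProj n j w) (imProj n j) w := (imProj n j).hasFDerivAt
  have h := (hp.fun_mul hp).fun_add (hq.fun_mul hq)
  have heq : (fun w : E => reProj n j w * reProj n j w + imProj n j w * imProj n j w)
      = fun w : E => Complex.normSq (w j) := by
    funext w; simp [reProj, imProj, Complex.normSq_apply]
  rw [heq] at h
  refine h.congr_fderiv ?_
  ext u
  simp [dNormSq, reProj, imProj]
  ring

lemma dNormSq_apply (j : Fin n) (w u : E) :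
    dNormSq n j w u = 2 * ((w j).re * (u j).re + (w j).im * (u j).im) := by
  simp [dNormSq, reProj, imProj]
  ring

/-- the key pointwise identity: `dNormSq` is `-2 ω₀(rot δⱼ w, ·)`. -/
lemma dNormSq_eq_omega (j : Fin n) (w u : E) :
    dNormSq n j w u = -2 * omega0 n (rot n (fun i => if i = j then 1 else 0) w) u := by
  rw [dNormSq_apply]
  have h : ∀ k : Fin n,
      ((starRingEnd ℂ) ((rot n (fun i => if i = j then 1 else 0) w) k) * u k).im
      = if k = j then -((w j).re * (u j).re + (w j).im * (u j).im) else 0 := by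
    intro k
    by_cases h : k = j
    · subst h
      simp [rot, Complex.mul_im, Complex.mul_re]
      ring
    · simp [rot, h]
  simp only [omega0, Finset.sum_congr rfl (fun k _ => h k), Finset.sum_ite_eq]
  simp
  ring

/-- similarly for a general coefficient vector. -/
lemma omega0_rot (a : Fin n → ℝ) (w u : E) :
    omega0 n (rot n a w) u = -∑ k, a k * ((w k).re * (u k).re + (w k).im * (u k).im) := by
  simp only [omega0]
  rw [← Finset.sum_neg_distrib]
  congr 1; funext k
  simp [rot, Complex.mul_im, Complex.mul_re]
  ring

end AlexanderAux
section Part2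
open Complex Metric Set Finset AlexanderAux

variable {n : ℕ}
local notation "E" => EuclideanSpace ℂ (Fin n)
local notation "Amat" A => ((A : Matrix (Fin n) (Fin n) ℤ))

lemma phi_zero {r : ℝ} (hr : 0 < r) (A : GL (Fin n) ℤ)
    (φ : EuclideanSpace ℂ (Fin n) → EuclideanSpace ℂ (Fin n))
    (hequiv : IsEquivariantOn n r A φ) : φ 0 = 0 := by
  ext i : 1
  obtain ⟨j, hj⟩ : ∃ j, ((A : Matrix (Fin n) (Fin n) ℤ) i j) ≠ 0 := by
    by_contra h
    push_neg at h
    have h1 : ((A * A⁻¹ : GL (Fin n) ℤ) : Matrix (Fin n) (Fin n) ℤ) = 1 := by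
      rw [mul_inv_cancel]; rfl
    have h2 := congrArg (fun M : Matrix (Fin n) (Fin n) ℤ => M i i) h1
    simp only [Matrix.GeneralLinearGroup.coe_mul, Matrix.mul_apply, Matrix.one_apply_eq] at h2
    simp [h] at h2
  set m : ℤ := (A : Matrix (Fin n) (Fin n) ℤ) i j with hm
  have hm0 : (m : ℝ) ≠ 0 := Int.cast_ne_zero.mpr hj
  set θ : ℝ := Real.pi / m with hθ
  have key := hequiv (fun l => if l = j then Circle.exp θ else 1) 0
    (Metric.mem_closedBall_self hr.le)
  have h0 : torusSMul n (fun l => if l = j then Circle.exp θ else 1) 0 = 0 := by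
    ext k : 1; simp [torusSMul]
  rw [h0] at key
  have hcomp := congrFun (congrArg WithLp.ofLp key) i
  have hcoe := torusAut_exp_single A j i θ
  have hmC : ((m : ℝ) : ℂ) ≠ 0 := by exact_mod_cast hm0
  have hexp : Complex.exp ((θ : ℂ) * ((m : ℝ) * Complex.I)) = -1 := by
    have h3 : (θ : ℂ) * ((m : ℝ) : ℂ) = ((Real.pi : ℝ) : ℂ) := by
      rw [hθ]
      push_cast
      exact div_mul_cancel₀ _ (Int.cast_ne_zero.mpr hj : (m : ℂ) ≠ 0)
    rw [← mul_assoc, h3, Complex.exp_pi_mul_I]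
  have : φ 0 i = -1 * φ 0 i := by
    calc φ 0 i = torusSMul n (torusAut n A (fun l => if l = j then Circle.exp θ else 1)) (φ 0) i := hcomp
    _ = ((torusAut n A (fun l => if l = j then Circle.exp θ else 1) i : Circle) : ℂ) * φ 0 i := rfl
    _ = -1 * φ 0 i := by rw [hcoe, ← hm, hexp]
  have h4 : φ 0 i + φ 0 i = 0 := by linear_combination this
  have h2 : φ 0 i = 0 := add_self_eq_zero.mp h4
  simpa using h2

lemma equivar_deriv {r : ℝ} (A : GL (Fin n) ℤ)
    (φ : EuclideanSpace ℂ (Fin n) → EuclideanSpace ℂ (Fin n))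
    (hsm : ContDiffOn ℝ (⊤ : ℕ∞) φ (Metric.closedBall 0 r))
    (hequiv : IsEquivariantOn n r A φ)
    {z : EuclideanSpace ℂ (Fin n)} (hz : z ∈ Metric.closedBall (0:EuclideanSpace ℂ (Fin n)) r)
    (k : Fin n) :
    fderivWithin ℝ φ (Metric.closedBall 0 r) z (rot n (fun i => if i = k then 1 else 0) z)
      = rot n (fun i => ((A : Matrix (Fin n) (Fin n) ℤ) i k : ℝ)) (φ z) := by
  set s := Metric.closedBall (0:EuclideanSpace ℂ (Fin n)) r with hs
  set δ : Fin n → ℝ := fun i => if i = k then 1 else 0 with hδ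
  have hd : HasFDerivWithinAt φ (fderivWithin ℝ φ s z) s z :=
    ((hsm.differentiableOn (by simp)) z hz).hasFDerivWithinAt
  have hc : HasDerivAt (curve n δ z) (rot n δ z) 0 := hasDerivAt_curve δ z
  have hmem : Set.MapsTo (curve n δ z) Set.univ s := by
    intro θ _
    rw [hs] at hz ⊢
    rw [Metric.mem_closedBall, dist_zero_right, norm_curve]
    rw [Metric.mem_closedBall, dist_zero_right] at hz
    exact hz
  have hcomp : HasDerivWithinAt (φ ∘ curve n δ z)
      (fderivWithin ℝ φ s z (rot n δ z)) Set.univ 0 :=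
    HasFDerivWithinAt.comp_hasDerivWithinAt_of_eq 0 hd hc.hasDerivWithinAt hmem
      (by rw [curve_zero])
  have hcomp' : HasDerivAt (fun θ => φ (curve n δ z θ))
      (fderivWithin ℝ φ s z (rot n δ z)) 0 := by
    have := hcomp.hasDerivAt (by simp)
    exact this
  have hgeq : (fun θ => φ (curve n δ z θ))
      = curve n (fun i => ((A : Matrix (Fin n) (Fin n) ℤ) i k : ℝ)) (φ z) := by
    funext θ
    rw [curve_eq_torusSMul, hequiv _ z hz]
    ext i : 1
    show ((torusAut n A (fun l => if l = k then Circle.exp θ else 1) i : Circle) : ℂ) * φ z i = _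
    rw [torusAut_exp_single]
    rfl
  rw [hgeq] at hcomp'
  exact hcomp'.unique (hasDerivAt_curve _ _)

end Part2
section Part3
open Complex Metric Set Finset AlexanderAux

variable {n : ℕ}

lemma fderivWithin_rot {r : ℝ} (A : GL (Fin n) ℤ)
    (φ : EuclideanSpace ℂ (Fin n) → EuclideanSpace ℂ (Fin n))
    (hsm : ContDiffOn ℝ (⊤ : ℕ∞) φ (Metric.closedBall 0 r))
    (hequiv : IsEquivariantOn n r A φ)
    {z : EuclideanSpace ℂ (Fin n)} (hz : z ∈ Metric.closedBall (0:EuclideanSpace ℂ (Fin n)) r)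
    (hud : UniqueDiffOn ℝ (Metric.closedBall (0:EuclideanSpace ℂ (Fin n)) r))
    (a : Fin n → ℝ) :
    fderivWithin ℝ φ (Metric.closedBall 0 r) z (rot n a z)
      = rot n (fun i => ∑ k, ((A : Matrix (Fin n) (Fin n) ℤ) i k : ℝ) * a k) (φ z) := by
  rw [rot_sum a z, map_sum]
  have h : ∀ k : Fin n,
      fderivWithin ℝ φ (Metric.closedBall 0 r) z (a k • rot n (fun i => if i = k then 1 else 0) z)
      = a k • rot n (fun i => ((A : Matrix (Fin n) (Fin n) ℤ) i k : ℝ)) (φ z) := by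
    intro k
    rw [map_smul, equivar_deriv A φ hsm hequiv hz k]
  rw [Finset.sum_congr rfl (fun k _ => h k)]
  ext i : 1
  rw [WithLp.ofLp_sum, Finset.sum_apply]
  have h2 : ∀ k : Fin n,
      (a k • rot n (fun i => ((A : Matrix (Fin n) (Fin n) ℤ) i k : ℝ)) (φ z)) i
      = ((((A : Matrix (Fin n) (Fin n) ℤ) i k : ℝ) * a k : ℝ) : ℂ) * (Complex.I * φ z i) := by
    intro k
    show (a k : ℂ) * ((((A : Matrix (Fin n) (Fin n) ℤ) i k : ℝ) : ℂ) * Complex.I * φ z i) = _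
    push_cast
    ring
  rw [Finset.sum_congr rfl (fun k _ => h2 k)]
  show _ = ((∑ k, ((A : Matrix (Fin n) (Fin n) ℤ) i k : ℝ) * a k : ℝ) : ℂ) * Complex.I * φ z i
  rw [← Finset.sum_mul, ← Complex.ofReal_sum]
  ring

lemma fderivWithin_rot_inv {r : ℝ} (A : GL (Fin n) ℤ)
    (φ : EuclideanSpace ℂ (Fin n) → EuclideanSpace ℂ (Fin n))
    (hsm : ContDiffOn ℝ (⊤ : ℕ∞) φ (Metric.closedBall 0 r))
    (hequiv : IsEquivariantOn n r A φ)
    {z : EuclideanSpace ℂ (Fin n)} (hz : z ∈ Metric.closedBall (0:EuclideanSpace ℂ (Fin n)) r)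
    (hud : UniqueDiffOn ℝ (Metric.closedBall (0:EuclideanSpace ℂ (Fin n)) r))
    (j : Fin n) :
    fderivWithin ℝ φ (Metric.closedBall 0 r) z
        (rot n (fun k => (((A⁻¹ : GL (Fin n) ℤ) : Matrix (Fin n) (Fin n) ℤ) k j : ℝ)) z)
      = rot n (fun i => if i = j then 1 else 0) (φ z) := by
  rw [fderivWithin_rot A φ hsm hequiv hz hud]
  congr 1
  ext i : 1
  set B : Matrix (Fin n) (Fin n) ℤ := ((A⁻¹ : GL (Fin n) ℤ) : Matrix (Fin n) (Fin n) ℤ) with hB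
  have h1 : (A : Matrix (Fin n) (Fin n) ℤ) * B = 1 := by
    rw [hB, ← Matrix.GeneralLinearGroup.coe_mul, mul_inv_cancel]
    rfl
  have h2 := congrArg (fun M : Matrix (Fin n) (Fin n) ℤ => M i j) h1
  simp only [Matrix.mul_apply] at h2
  have h3 : (∑ k, ((A : Matrix (Fin n) (Fin n) ℤ) i k : ℝ) * (B k j : ℝ))
      = (((1 : Matrix (Fin n) (Fin n) ℤ) i j : ℤ) : ℝ) := by exact_mod_cast h2
  show (∑ k, ((A : Matrix (Fin n) (Fin n) ℤ) i k : ℝ) * (B k j : ℝ)) = _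
  rw [h3]
  show _ = (if i = j then (1:ℝ) else 0)
  by_cases h : i = j <;> simp [h, Matrix.one_apply]

end Part3
section Part4
open Complex Metric Set Finset AlexanderAux

variable {n : ℕ}

lemma moment_identity {r : ℝ} (hr : 0 < r) (A : GL (Fin n) ℤ)
    (φ : EuclideanSpace ℂ (Fin n) → EuclideanSpace ℂ (Fin n))
    (hsm : ContDiffOn ℝ (⊤ : ℕ∞) φ (Metric.closedBall 0 r))
    (hpres : ∀ z ∈ Metric.closedBall (0 : EuclideanSpace ℂ (Fin n)) r, ∀ u v,
      omega0 n (fderivWithin ℝ φ (Metric.closedBall 0 r) z u)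
        (fderivWithin ℝ φ (Metric.closedBall 0 r) z v) = omega0 n u v)
    (hequiv : IsEquivariantOn n r A φ)
    {z : EuclideanSpace ℂ (Fin n)} (hz : z ∈ Metric.closedBall (0:EuclideanSpace ℂ (Fin n)) r)
    (j : Fin n) :
    Complex.normSq (φ z j)
      = ∑ k, ((((A⁻¹ : GL (Fin n) ℤ) : Matrix (Fin n) (Fin n) ℤ) k j : ℝ))
          * Complex.normSq (z k) := by
  have hud : UniqueDiffOn ℝ (Metric.closedBall (0:EuclideanSpace ℂ (Fin n)) r) :=
    uniqueDiffOn_convex (convex_closedBall _ _)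
      (by rw [interior_closedBall _ hr.ne']; exact ⟨0, Metric.mem_ball_self hr⟩)
  set C : Fin n → ℝ :=
    fun k => ((((A⁻¹ : GL (Fin n) ℤ) : Matrix (Fin n) (Fin n) ℤ) k j : ℤ) : ℝ) with hC
  set H : EuclideanSpace ℂ (Fin n) → ℝ :=
    fun w => Complex.normSq (φ w j) - ∑ k, C k * Complex.normSq (w k) with hH
  -- each point of the ball: H has derivative 0 within the ball
  have key : ∀ x ∈ Metric.closedBall (0:EuclideanSpace ℂ (Fin n)) r,
      HasFDerivWithinAt H (0 : EuclideanSpace ℂ (Fin n) →L[ℝ] ℝ) (Metric.closedBall 0 r) x := by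
    intro x hx
    have hφd : HasFDerivWithinAt φ (fderivWithin ℝ φ (Metric.closedBall 0 r) x)
        (Metric.closedBall 0 r) x := ((hsm.differentiableOn (by simp)) x hx).hasFDerivWithinAt
    have h1 : HasFDerivWithinAt (fun w => Complex.normSq (φ w j))
        ((dNormSq n j (φ x)).comp (fderivWithin ℝ φ (Metric.closedBall 0 r) x))
        (Metric.closedBall 0 r) x :=
      (hasFDerivAt_normSq_comp j (φ x)).comp_hasFDerivWithinAt x hφd
    have h2 : HasFDerivWithinAt (fun w : EuclideanSpace ℂ (Fin n) =>
        ∑ k, C k * Complex.normSq (w k)) (∑ k, C k • dNormSq n k x)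
        (Metric.closedBall 0 r) x := by
      have hterm : ∀ k : Fin n, HasFDerivAt
          (fun w : EuclideanSpace ℂ (Fin n) => C k * Complex.normSq (w k))
          (C k • dNormSq n k x) x :=
        fun k => (hasFDerivAt_normSq_comp k x).const_mul (C k)
      exact (HasFDerivAt.fun_sum (fun k (_ : k ∈ Finset.univ) => hterm k)).hasFDerivWithinAt
    have h3 := h1.sub h2
    have h4 : ((dNormSq n j (φ x)).comp (fderivWithin ℝ φ (Metric.closedBall 0 r) x)
        - ∑ k, C k • dNormSq n k x) = 0 := by
      ext u
      simp only [ContinuousLinearMap.sub_apply, ContinuousLinearMap.comp_apply,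
        ContinuousLinearMap.zero_apply, ContinuousLinearMap.sum_apply,
        ContinuousLinearMap.smul_apply, smul_eq_mul]
      rw [dNormSq_eq_omega]
      rw [← fderivWithin_rot_inv A φ hsm hequiv hx hud j]
      rw [hpres x hx]
      rw [omega0_rot]
      have : ∀ k : Fin n, C k * dNormSq n k x u
          = C k * (2 * ((x k).re * (u k).re + (x k).im * (u k).im)) := by
        intro k; rw [dNormSq_apply]
      rw [Finset.sum_congr rfl (fun k _ => this k)]
      simp only [hC]
      rw [sub_eq_zero, neg_mul_neg, Finset.mul_sum]
      apply Finset.sum_congr rfl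
      intro k _
      ring
    rw [h4] at h3
    exact h3
  -- mean value theorem: H is constant on the ball
  have h0mem : (0 : EuclideanSpace ℂ (Fin n)) ∈ Metric.closedBall (0:EuclideanSpace ℂ (Fin n)) r :=
    Metric.mem_closedBall_self hr.le
  have hconst : ‖H z - H 0‖ ≤ 0 * ‖z - 0‖ := by
    apply Convex.norm_image_sub_le_of_norm_fderivWithin_le
      (fun x hx => (key x hx).differentiableWithinAt)
      (fun x hx => ?_) (convex_closedBall _ _) h0mem hz
    rw [(key x hx).fderivWithin (hud x hx)]
    simp
  have hφ0 : φ 0 = 0 := phi_zero hr A φ hequiv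
  have hH0 : H 0 = 0 := by
    simp [hH, hφ0]
  have : H z = 0 := by
    have h5 : H z - H 0 = 0 := by simpa using hconst
    rw [sub_eq_zero] at h5
    rw [h5, hH0]
  have hfin : Complex.normSq (φ z j) - ∑ k, C k * Complex.normSq (z k) = 0 := this
  linarith [hfin]

end Part4
section Part5
open Complex Metric Set Finset AlexanderAux

variable {n : ℕ}

lemma entry_AC (A : GL (Fin n) ℤ) (i j : Fin n) :
    ∑ k, ((A : Matrix (Fin n) (Fin n) ℤ) i k : ℝ)
      * (((A⁻¹ : GL (Fin n) ℤ) : Matrix (Fin n) (Fin n) ℤ) k j : ℝ)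
      = if i = j then 1 else 0 := by
  set B : Matrix (Fin n) (Fin n) ℤ := ((A⁻¹ : GL (Fin n) ℤ) : Matrix (Fin n) (Fin n) ℤ) with hB
  have h1 : (A : Matrix (Fin n) (Fin n) ℤ) * B = 1 := by
    rw [hB, ← Matrix.GeneralLinearGroup.coe_mul, mul_inv_cancel]
    rfl
  have h2 := congrArg (fun M : Matrix (Fin n) (Fin n) ℤ => M i j) h1
  simp only [Matrix.mul_apply] at h2
  have h3 : (∑ k, ((A : Matrix (Fin n) (Fin n) ℤ) i k : ℝ) * (B k j : ℝ))
      = (((1 : Matrix (Fin n) (Fin n) ℤ) i j : ℤ) : ℝ) := by exact_mod_cast h2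
  rw [h3]
  by_cases h : i = j <;> simp [h, Matrix.one_apply]

lemma entry_CA (A : GL (Fin n) ℤ) (i j : Fin n) :
    ∑ k, (((A⁻¹ : GL (Fin n) ℤ) : Matrix (Fin n) (Fin n) ℤ) i k : ℝ)
      * ((A : Matrix (Fin n) (Fin n) ℤ) k j : ℝ)
      = if i = j then 1 else 0 := by
  set B : Matrix (Fin n) (Fin n) ℤ := ((A⁻¹ : GL (Fin n) ℤ) : Matrix (Fin n) (Fin n) ℤ) with hB
  have h1 : B * (A : Matrix (Fin n) (Fin n) ℤ) = 1 := by
    rw [hB, ← Matrix.GeneralLinearGroup.coe_mul, inv_mul_cancel]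
    rfl
  have h2 := congrArg (fun M : Matrix (Fin n) (Fin n) ℤ => M i j) h1
  simp only [Matrix.mul_apply] at h2
  have h3 : (∑ k, (B i k : ℝ) * ((A : Matrix (Fin n) (Fin n) ℤ) k j : ℝ))
      = (((1 : Matrix (Fin n) (Fin n) ℤ) i j : ℤ) : ℝ) := by exact_mod_cast h2
  rw [h3]
  by_cases h : i = j <;> simp [h, Matrix.one_apply]

lemma single_mem {r : ℝ} (hr : 0 < r) (k : Fin n) :
    EuclideanSpace.single k (r : ℂ) ∈ Metric.closedBall (0:EuclideanSpace ℂ (Fin n)) r := by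
  rw [mem_closedBall_zero_iff, EuclideanSpace.norm_single]
  simp [abs_of_pos hr]

lemma normSq_single (r : ℝ) (k l : Fin n) :
    Complex.normSq ((EuclideanSpace.single k (r : ℂ)) l) = if l = k then r ^ 2 else 0 := by
  rw [EuclideanSpace.single_apply]
  by_cases h : l = k <;> simp [h, Complex.normSq_ofReal, sq]

lemma norm_preserved {r : ℝ} (hr : 0 < r) (A : GL (Fin n) ℤ)
    (φ ψ : EuclideanSpace ℂ (Fin n) → EuclideanSpace ℂ (Fin n))
    (hbij : Set.BijOn φ (Metric.closedBall 0 r) (Metric.closedBall 0 r))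
    (hinv : ∀ z ∈ Metric.closedBall (0 : EuclideanSpace ℂ (Fin n)) r,
      ψ (φ z) = z ∧ φ (ψ z) = z)
    (hsymp : IsSymplecticOn n r φ) (hequiv : IsEquivariantOn n r A φ) :
    ∀ z ∈ Metric.closedBall (0 : EuclideanSpace ℂ (Fin n)) r, ‖φ z‖ = ‖z‖ := by
  classical
  set Cm : Fin n → Fin n → ℝ :=
    fun k j => (((A⁻¹ : GL (Fin n) ℤ) : Matrix (Fin n) (Fin n) ℤ) k j : ℝ) with hCm
  set Am : Fin n → Fin n → ℝ :=
    fun i k => ((A : Matrix (Fin n) (Fin n) ℤ) i k : ℝ) with hAm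
  have M : ∀ z ∈ Metric.closedBall (0:EuclideanSpace ℂ (Fin n)) r, ∀ j,
      Complex.normSq (φ z j) = ∑ k, Cm k j * Complex.normSq (z k) :=
    fun z hz j => moment_identity hr A φ hsymp.1 hsymp.2 hequiv hz j
  have hψmaps : ∀ w ∈ Metric.closedBall (0:EuclideanSpace ℂ (Fin n)) r,
      ψ w ∈ Metric.closedBall (0:EuclideanSpace ℂ (Fin n)) r := by
    intro w hw
    obtain ⟨z, hz, hφz⟩ := hbij.surjOn hw
    rw [← hφz, (hinv z hz).1]
    exact hz
  have Mψ : ∀ w ∈ Metric.closedBall (0:EuclideanSpace ℂ (Fin n)) r, ∀ k,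
      Complex.normSq (ψ w k) = ∑ j, Am j k * Complex.normSq (w j) := by
    intro w hw k
    have base : ∀ j, Complex.normSq (w j) = ∑ l, Cm l j * Complex.normSq (ψ w l) := by
      intro j
      have h := M (ψ w) (hψmaps w hw) j
      rw [(hinv w hw).2] at h
      exact h
    calc Complex.normSq (ψ w k)
        = ∑ l, (if l = k then (1:ℝ) else 0) * Complex.normSq (ψ w l) := by
          simp [ite_mul]
      _ = ∑ l, (∑ j, Cm l j * Am j k) * Complex.normSq (ψ w l) := by
          apply Finset.sum_congr rfl; intro l _; rw [entry_CA A l k]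
      _ = ∑ l, ∑ j, Am j k * (Cm l j * Complex.normSq (ψ w l)) := by
          apply Finset.sum_congr rfl; intro l _
          rw [Finset.sum_mul]
          apply Finset.sum_congr rfl; intro j _; ring
      _ = ∑ j, Am j k * ∑ l, Cm l j * Complex.normSq (ψ w l) := by
          rw [Finset.sum_comm]
          apply Finset.sum_congr rfl; intro j _
          rw [Finset.mul_sum]
      _ = ∑ j, Am j k * Complex.normSq (w j) := by
          apply Finset.sum_congr rfl; intro j _; rw [← base j]
  -- values on the coordinate points
  have hMsingle : ∀ k j, Complex.normSq (φ (EuclideanSpace.single k (r:ℂ)) j)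
      = Cm k j * r ^ 2 := by
    intro k j
    have h := M _ (single_mem hr k) j
    have h2 : ∀ l, Cm l j * Complex.normSq ((EuclideanSpace.single k (r:ℂ)) l)
        = if l = k then Cm k j * r ^ 2 else 0 := by
      intro l
      rw [normSq_single]
      by_cases hl : l = k <;> simp [hl]
    rw [Finset.sum_congr rfl (fun l _ => h2 l)] at h
    simpa using h
  have hMψsingle : ∀ j k, Complex.normSq (ψ (EuclideanSpace.single j (r:ℂ)) k)
      = Am j k * r ^ 2 := by
    intro j k
    have h := Mψ _ (single_mem hr j) k
    have h2 : ∀ l, Am l k * Complex.normSq ((EuclideanSpace.single j (r:ℂ)) l)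
        = if l = j then Am j k * r ^ 2 else 0 := by
      intro l
      rw [normSq_single]
      by_cases hl : l = j <;> simp [hl]
    rw [Finset.sum_congr rfl (fun l _ => h2 l)] at h
    simpa using h
  have hr2 : (0:ℝ) < r ^ 2 := by positivity
  have hCnn : ∀ k j, 0 ≤ Cm k j := by
    intro k j
    have h := hMsingle k j
    nlinarith [Complex.normSq_nonneg (φ (EuclideanSpace.single k (r:ℂ)) j)]
  have hAnn : ∀ j k, 0 ≤ Am j k := by
    intro j k
    have h := hMψsingle j k
    nlinarith [Complex.normSq_nonneg (ψ (EuclideanSpace.single j (r:ℂ)) k)]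
  have hballsq : ∀ w : EuclideanSpace ℂ (Fin n), w ∈ Metric.closedBall (0:EuclideanSpace ℂ (Fin n)) r →
      ∑ j, Complex.normSq (w j) ≤ r ^ 2 := by
    intro w hw
    rw [normSq_sum_eq]
    have hn := mem_closedBall_zero_iff.mp hw
    nlinarith [norm_nonneg w]
  set c : Fin n → ℝ := fun k => ∑ j, Cm k j with hc
  have hcle : ∀ k, c k ≤ 1 := by
    intro k
    have h := hballsq _ (hbij.mapsTo (single_mem hr k))
    rw [Finset.sum_congr rfl (fun j _ => hMsingle k j), ← Finset.sum_mul] at h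
    have : c k * r ^ 2 ≤ 1 * r ^ 2 := by rw [one_mul]; exact h
    exact le_of_mul_le_mul_right (by linarith) hr2
  have haje : ∀ j, ∑ k, Am j k ≤ 1 := by
    intro j
    have h := hballsq _ (hψmaps _ (single_mem hr j))
    rw [Finset.sum_congr rfl (fun k _ => hMψsingle j k), ← Finset.sum_mul] at h
    have h2 : (∑ k, Am j k) * r ^ 2 ≤ 1 * r ^ 2 := by rw [one_mul]; exact h
    exact le_of_mul_le_mul_right h2 hr2
  have hc1 : ∀ k, c k = 1 := by
    intro k
    obtain ⟨j0, hj0⟩ : ∃ j0, Am j0 k ≠ 0 := by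
      by_contra hcon
      push_neg at hcon
      have h := entry_CA A k k
      simp only [hAm] at hcon
      simp [hcon] at h
    have hsum1 : ∀ j, ∑ k', Am j k' * c k' = 1 := by
      intro j
      calc ∑ k', Am j k' * c k' = ∑ k', ∑ l, Am j k' * Cm k' l := by
            apply Finset.sum_congr rfl; intro k' _
            rw [hc, Finset.mul_sum]
        _ = ∑ l, ∑ k', Am j k' * Cm k' l := Finset.sum_comm
        _ = ∑ l, if j = l then (1:ℝ) else 0 := by
            apply Finset.sum_congr rfl; intro l _
            exact entry_AC A j l
        _ = 1 := by simp
    have hnn : ∀ j k', 0 ≤ Am j k' * (1 - c k') :=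
      fun j k' => mul_nonneg (hAnn j k') (by linarith [hcle k'])
    have hterm : ∑ k', Am j0 k' * (1 - c k') = 0 := by
      have expand : ∑ k', Am j0 k' * (1 - c k')
          = (∑ k', Am j0 k') - ∑ k', Am j0 k' * c k' := by
        rw [← Finset.sum_sub_distrib]
        apply Finset.sum_congr rfl; intro k' _; ring
      have hle : ∑ k', Am j0 k' * (1 - c k') ≤ 0 := by
        rw [expand, hsum1 j0]; linarith [haje j0]
      exact le_antisymm hle (Finset.sum_nonneg fun k' _ => hnn j0 k')
    have hterm0 := (Finset.sum_eq_zero_iff_of_nonneg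
      (fun k' _ => hnn j0 k')).mp hterm k (Finset.mem_univ k)
    rcases mul_eq_zero.mp hterm0 with h | h
    · exact absurd h hj0
    · linarith
  intro z hz
  have hsq : ‖φ z‖ ^ 2 = ‖z‖ ^ 2 := by
    rw [← normSq_sum_eq, ← normSq_sum_eq]
    calc ∑ j, Complex.normSq (φ z j) = ∑ j, ∑ k, Cm k j * Complex.normSq (z k) :=
          Finset.sum_congr rfl fun j _ => M z hz j
      _ = ∑ k, ∑ j, Cm k j * Complex.normSq (z k) := Finset.sum_comm
      _ = ∑ k, c k * Complex.normSq (z k) := by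
          apply Finset.sum_congr rfl; intro k _
          rw [hc, Finset.sum_mul]
      _ = ∑ k, Complex.normSq (z k) := by
          apply Finset.sum_congr rfl; intro k _
          rw [hc1 k, one_mul]
  have hsqrt := congrArg Real.sqrt hsq
  rwa [Real.sqrt_sq (norm_nonneg _), Real.sqrt_sq (norm_nonneg _)] at hsqrt

end Part5
section Main
open Complex Metric Set Finset AlexanderAux

lemma torusSMul_real_smul {n : ℕ} (τ : Fin n → Circle) (t : ℝ)
    (z : EuclideanSpace ℂ (Fin n)) :
    torusSMul n τ (t • z) = t • torusSMul n τ z := by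
  ext k : 1
  show (τ k : ℂ) * (t • z) k = (t • torusSMul n τ z) k
  rw [PiLp.smul_apply, PiLp.smul_apply]
  show (τ k : ℂ) * (t • z k) = t • ((τ k : ℂ) * z k)
  rw [Complex.real_smul, Complex.real_smul]
  ring

/-- If `φ : B_r → B_r` is a `Λ_A`-equivariant symplectomorphism of `B_r` (a bijection
of `B_r` onto itself with inverse `ψ`, both `C^∞` on `B_r`, `φ` symplectic and
`Λ_A`-equivariant), then for `0 < t ≤ 1` the map `φ_t(z) = t⁻¹·φ(t·z)` is again a
`Λ_A`-equivariant symplectomorphism of `B_r`, with inverse `z ↦ t⁻¹·ψ(t·z)`. -/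
theorem alexander_trick_equivariant_symplectomorphism (n : ℕ) (hn : 1 ≤ n) (r : ℝ)
    (hr : 0 < r) (A : GL (Fin n) ℤ)
    (φ ψ : EuclideanSpace ℂ (Fin n) → EuclideanSpace ℂ (Fin n))
    (hbij : Set.BijOn φ (Metric.closedBall 0 r) (Metric.closedBall 0 r))
    (hinv : ∀ z ∈ Metric.closedBall (0 : EuclideanSpace ℂ (Fin n)) r,
      ψ (φ z) = z ∧ φ (ψ z) = z)
    (hψsmooth : ContDiffOn ℝ (⊤ : ℕ∞) ψ (Metric.closedBall 0 r))
    (hsymp : IsSymplecticOn n r φ) (hequiv : IsEquivariantOn n r A φ)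
    (t : ℝ) (ht0 : 0 < t) (ht1 : t ≤ 1) :
    Set.BijOn (fun z => t⁻¹ • φ (t • z)) (Metric.closedBall 0 r)
        (Metric.closedBall 0 r) ∧
      (∀ z ∈ Metric.closedBall (0 : EuclideanSpace ℂ (Fin n)) r,
        (fun z => t⁻¹ • ψ (t • z)) ((fun z => t⁻¹ • φ (t • z)) z) = z ∧
        (fun z => t⁻¹ • φ (t • z)) ((fun z => t⁻¹ • ψ (t • z)) z) = z) ∧
      ContDiffOn ℝ (⊤ : ℕ∞) (fun z => t⁻¹ • ψ (t • z)) (Metric.closedBall 0 r) ∧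
      IsSymplecticOn n r (fun z => t⁻¹ • φ (t • z)) ∧
      IsEquivariantOn n r A (fun z => t⁻¹ • φ (t • z)) := by
  have htne : t ≠ 0 := ht0.ne'
  have hφnorm := norm_preserved hr A φ ψ hbij hinv hsymp hequiv
  have hψmaps : ∀ w ∈ Metric.closedBall (0 : EuclideanSpace ℂ (Fin n)) r,
      ψ w ∈ Metric.closedBall (0 : EuclideanSpace ℂ (Fin n)) r := by
    intro w hw
    obtain ⟨z, hz, hφz⟩ := hbij.surjOn hw
    rw [← hφz, (hinv z hz).1]
    exact hz
  have hψnorm : ∀ w ∈ Metric.closedBall (0 : EuclideanSpace ℂ (Fin n)) r, ‖ψ w‖ = ‖w‖ := by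
    intro w hw
    have h := hφnorm (ψ w) (hψmaps w hw)
    rw [(hinv w hw).2] at h
    exact h.symm
  have hsmul_mem : ∀ z ∈ Metric.closedBall (0 : EuclideanSpace ℂ (Fin n)) r,
      t • z ∈ Metric.closedBall (0 : EuclideanSpace ℂ (Fin n)) r := by
    intro z hz
    rw [mem_closedBall_zero_iff] at hz ⊢
    rw [norm_smul, Real.norm_eq_abs, abs_of_pos ht0]
    nlinarith [norm_nonneg z]
  have hφtnorm : ∀ z ∈ Metric.closedBall (0 : EuclideanSpace ℂ (Fin n)) r,
      ‖t⁻¹ • φ (t • z)‖ = ‖z‖ := by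
    intro z hz
    rw [norm_smul, Real.norm_eq_abs, abs_of_pos (inv_pos.mpr ht0),
      hφnorm (t • z) (hsmul_mem z hz), norm_smul, Real.norm_eq_abs, abs_of_pos ht0]
    field_simp
  have hψtnorm : ∀ w ∈ Metric.closedBall (0 : EuclideanSpace ℂ (Fin n)) r,
      ‖t⁻¹ • ψ (t • w)‖ = ‖w‖ := by
    intro w hw
    rw [norm_smul, Real.norm_eq_abs, abs_of_pos (inv_pos.mpr ht0),
      hψnorm (t • w) (hsmul_mem w hw), norm_smul, Real.norm_eq_abs, abs_of_pos ht0]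
    field_simp
  have hmapsto : Set.MapsTo (fun z => t⁻¹ • φ (t • z)) (Metric.closedBall 0 r)
      (Metric.closedBall 0 r) := by
    intro z hz
    rw [mem_closedBall_zero_iff]
    rw [mem_closedBall_zero_iff] at hz
    show ‖t⁻¹ • φ (t • z)‖ ≤ r
    rw [hφtnorm z (mem_closedBall_zero_iff.mpr hz)]
    exact hz
  have hud : UniqueDiffOn ℝ (Metric.closedBall (0:EuclideanSpace ℂ (Fin n)) r) :=
    uniqueDiffOn_convex (convex_closedBall _ _)
      (by rw [interior_closedBall _ hr.ne']; exact ⟨0, Metric.mem_ball_self hr⟩)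
  refine ⟨⟨hmapsto, ?_, ?_⟩, ?_, ?_, ⟨?_, ?_⟩, ?_⟩
  · -- InjOn
    intro z1 h1 z2 h2 heq
    have h3 : φ (t • z1) = φ (t • z2) := by
      have := congrArg (fun x => t • x) heq
      simpa [smul_inv_smul₀ htne] using this
    have h4 := hbij.injOn (hsmul_mem z1 h1) (hsmul_mem z2 h2) h3
    have := congrArg (fun x => t⁻¹ • x) h4
    simpa [inv_smul_smul₀ htne] using this
  · -- SurjOn
    intro w hw
    refine ⟨t⁻¹ • ψ (t • w), ?_, ?_⟩
    · rw [mem_closedBall_zero_iff, hψtnorm w hw]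
      exact mem_closedBall_zero_iff.mp hw
    · show t⁻¹ • φ (t • (t⁻¹ • ψ (t • w))) = w
      rw [smul_inv_smul₀ htne, (hinv (t • w) (hsmul_mem w hw)).2, inv_smul_smul₀ htne]
  · -- inverse identities
    intro z hz
    constructor
    · show t⁻¹ • ψ (t • (t⁻¹ • φ (t • z))) = z
      rw [smul_inv_smul₀ htne, (hinv (t • z) (hsmul_mem z hz)).1, inv_smul_smul₀ htne]
    · show t⁻¹ • φ (t • (t⁻¹ • ψ (t • z))) = z
      rw [smul_inv_smul₀ htne, (hinv (t • z) (hsmul_mem z hz)).2, inv_smul_smul₀ htne]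
  · -- smoothness of inverse
    have hinner : ContDiffOn ℝ (⊤ : ℕ∞) (fun z : EuclideanSpace ℂ (Fin n) => t • z)
        (Metric.closedBall 0 r) := (contDiff_id.const_smul t).contDiffOn
    exact (hψsmooth.comp hinner hsmul_mem).const_smul t⁻¹
  · -- smoothness of φ_t
    have hinner : ContDiffOn ℝ (⊤ : ℕ∞) (fun z : EuclideanSpace ℂ (Fin n) => t • z)
        (Metric.closedBall 0 r) := (contDiff_id.const_smul t).contDiffOn
    exact (hsymp.1.comp hinner hsmul_mem).const_smul t⁻¹
  · -- symplectic property
    intro z hz u v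
    have hid : HasFDerivWithinAt (fun z : EuclideanSpace ℂ (Fin n) => t • z)
        (t • ContinuousLinearMap.id ℝ (EuclideanSpace ℂ (Fin n)))
        (Metric.closedBall 0 r) z :=
      ((t • ContinuousLinearMap.id ℝ (EuclideanSpace ℂ (Fin n))).hasFDerivAt).hasFDerivWithinAt
    have hφ' : HasFDerivWithinAt φ
        (fderivWithin ℝ φ (Metric.closedBall 0 r) (t • z)) (Metric.closedBall 0 r) (t • z) :=
      ((hsymp.1.differentiableOn (by simp)) _ (hsmul_mem z hz)).hasFDerivWithinAt
    have hcomp := (hφ'.comp z hid hsmul_mem).const_smul t⁻¹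
    have hDeq : fderivWithin ℝ (fun z => t⁻¹ • φ (t • z)) (Metric.closedBall 0 r) z
        = t⁻¹ • ((fderivWithin ℝ φ (Metric.closedBall 0 r) (t • z)).comp
            (t • ContinuousLinearMap.id ℝ (EuclideanSpace ℂ (Fin n)))) := by
      apply HasFDerivWithinAt.fderivWithin _ (hud z hz)
      exact hcomp
    rw [hDeq]
    have happ : ∀ u : EuclideanSpace ℂ (Fin n),
        (t⁻¹ • ((fderivWithin ℝ φ (Metric.closedBall 0 r) (t • z)).comp
            (t • ContinuousLinearMap.id ℝ (EuclideanSpace ℂ (Fin n))))) u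
        = t⁻¹ • (fderivWithin ℝ φ (Metric.closedBall 0 r) (t • z)) (t • u) := by
      intro u
      simp [ContinuousLinearMap.smul_apply]
    rw [happ u, happ v, omega0_smul_left, omega0_smul_right,
      hsymp.2 (t • z) (hsmul_mem z hz) (t • u) (t • v),
      omega0_smul_left, omega0_smul_right]
    field_simp
  · -- equivariance
    intro τ z hz
    show t⁻¹ • φ (t • torusSMul n τ z) = torusSMul n (torusAut n A τ) (t⁻¹ • φ (t • z))
    rw [← torusSMul_real_smul, hequiv τ (t • z) (hsmul_mem z hz), torusSMul_real_smul]

end Main
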